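/- If t⁰ is not a global minimizer of ψ, then ψ̃(t*; t⁰) < ψ̃(t⁰; t⁰). -/

import Mathlib

/-!
If `t⁰` minimized the surrogate `ψ̃(·; t⁰)`, it would minimize `ψ` as well: the difference
`ψ̃(·; t⁰) - ψ = l̃(·; t⁰) - l` has zero derivative at `t⁰`, and if `φ` has zero derivative at a
minimizer `x` of `φ + f` with `f` convex, then `x` minimizes `f` (compare along each segment
from `x`). Hence `ψ̃(t*; t⁰) ≤ ψ̃(t⁰; t⁰)` must be strict.
-/

open Set

noncomputable def taylor2 {n : ℕ} (l : (Fin n → ℝ) → ℝ) (t0 t : Fin n → ℝ) : ℝ :=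
  l t0 + fderiv ℝ l t0 (t - t0)
    + (1 / 2) * fderiv ℝ (fun x => fderiv ℝ l x) t0 (t - t0) (t - t0)

section

variable {E F : Type*} [NormedAddCommGroup E] [NormedSpace ℝ E] [NormedAddCommGroup F]
  [NormedSpace ℝ F]

theorem ConvexOn.isMinOn_of_isMinOn_add {s : Set E} {φ f : E → ℝ} {x : E}
    (hf : ConvexOn ℝ s f) (hx : x ∈ s) (hφ : HasFDerivAt φ (0 : E →L[ℝ] ℝ) x)
    (hmin : IsMinOn (φ + f) s x) :
    IsMinOn f s x := by
  intro y hy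
  -- By convexity of `f`, `k τ + f x ≥ (φ + f) (lineMap x y τ)`, with equality at `τ = 0`.
  let k : ℝ → ℝ := fun τ => φ (AffineMap.lineMap x y τ) + τ * (f y - f x)
  have hk_min : IsMinOn k (Icc 0 1) 0 := by
    intro τ ⟨hτ0, hτ1⟩
    have hconv : f (AffineMap.lineMap x y τ) ≤ (1 - τ) * f x + τ * f y := by
      rw [AffineMap.lineMap_apply_module]
      exact hf.2 hx hy (by linarith) hτ0 (by ring)
    have hsum : φ x + f x ≤ φ (AffineMap.lineMap x y τ) + f (AffineMap.lineMap x y τ) :=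
      hmin (hf.1.lineMap_mem hx hy ⟨hτ0, hτ1⟩)
    show k 0 ≤ k τ
    simp only [k, AffineMap.lineMap_apply_zero, zero_mul, add_zero]
    linarith
  have hk_deriv : HasDerivAt k (f y - f x) 0 := by
    have hφ_line : HasDerivAt (fun τ : ℝ => φ (AffineMap.lineMap x y τ)) 0 0 := by
      simpa using (AffineMap.lineMap_apply_zero x y (k := ℝ) ▸ hφ).comp_hasDerivAt (0 : ℝ)
        (AffineMap.hasDerivAt_lineMap (a := x) (b := y) (x := 0))
    have hsum := hφ_line.add (hasDerivAt_mul_const (f y - f x))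
    rwa [zero_add] at hsum
  have hone : (1 : ℝ) ∈ posTangentConeAt (Icc 0 1) 0 :=
    mem_posTangentConeAt_of_segment_subset (by simp [segment_eq_Icc])
  simpa using hk_min.localize.hasFDerivWithinAt_nonneg hk_deriv.hasDerivWithinAt hone

theorem ContinuousLinearMap.hasFDerivAt_apply_sub_sub_self (B : E →L[ℝ] E →L[ℝ] F) (a : E) :
    HasFDerivAt (fun x => B (x - a) (x - a)) (0 : E →L[ℝ] F) a := by
  simpa using B.hasFDerivAt_of_bilinear (hasFDerivAt_sub_const (x := a) a)
    (hasFDerivAt_sub_const (x := a) a)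

end

theorem hasFDerivAt_taylor2 {n : ℕ} (l : (Fin n → ℝ) → ℝ) (t0 : Fin n → ℝ) :
    HasFDerivAt (taylor2 l t0) (fderiv ℝ l t0) t0 := by
  have hlin : HasFDerivAt (fun t => fderiv ℝ l t0 (t - t0)) (fderiv ℝ l t0) t0 :=
    (fderiv ℝ l t0).hasFDerivAt.comp t0 (hasFDerivAt_sub_const t0)
  have hquad := ((fderiv ℝ (fun x => fderiv ℝ l x) t0).hasFDerivAt_apply_sub_sub_self t0).const_mul
    (1 / 2 : ℝ)
  have hsum := (hlin.const_add (l t0)).add hquad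
  rw [smul_zero, add_zero] at hsum
  exact hsum

/-- if `t⁰` is not a global minimizer of `ψ = l + P`, then
`ψ̃(t*; t⁰) < ψ̃(t⁰; t⁰)`, where `t*` is a global minimizer of the surrogate
`ψ̃(·; t⁰) = l̃(·; t⁰) + P`. -/
theorem stmt4 {n : ℕ} (l P : (Fin n → ℝ) → ℝ)
    (hl_smooth : ContDiff ℝ 2 l) (hl_conv : ConvexOn ℝ Set.univ l)
    (hP_conv : ConvexOn ℝ Set.univ P)
    (t0 tstar : Fin n → ℝ)
    (ψ : (Fin n → ℝ) → ℝ) (hψ : ∀ t, ψ t = l t + P t)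
    (ψt : (Fin n → ℝ) → ℝ) (hψt : ∀ t, ψt t = taylor2 l t0 t + P t)
    (htstar : ∀ t, ψt tstar ≤ ψt t)
    (hnotmin : ¬ ∀ t, ψ t0 ≤ ψ t) :
    ψt tstar < ψt t0 := by
  have hψ_conv : ConvexOn ℝ univ ψ := funext hψ ▸ hl_conv.add hP_conv
  have hgap : HasFDerivAt (taylor2 l t0 - l) (0 : _ →L[ℝ] ℝ) t0 := by
    simpa using (hasFDerivAt_taylor2 l t0).sub
      ((hl_smooth.differentiable (by norm_num)) t0).hasFDerivAt
  have hsplit : ψt = (taylor2 l t0 - l) + ψ := by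
    ext t
    simp only [hψt, hψ, Pi.add_apply, Pi.sub_apply]
    ring
  refine lt_of_not_ge fun hle => hnotmin fun t => ?_
  have hmin : IsMinOn ψt univ t0 := fun t _ => hle.trans (htstar t)
  exact hψ_conv.isMinOn_of_isMinOn_add (mem_univ t0) hgap (hsplit ▸ hmin) (mem_univ t)
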